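/- For m ≥ 1 let J_m ≤ G be the subgroup of invertible matrices (a, b; c, d) with a − 1 ∈ t𝒪, b ∈ 𝒪, c ∈ t^m𝒪, d − 1 ∈ t𝒪 and determinant in 𝒪ˣ. For any n ≥ 1, if v ∈ V is fixed by every element of J_{n+1}, then S·v is fixed by every element of J_n. In particular, if v is fixed by the pro-p Iwahori subgroup I₁ = J₁, then so is S·v. (Lemma 5.1(iv) of the paper.) -/

import Mathlib

/-!
For `g = (a, b; c, d) ∈ J_n` and `λ ∈ F`, put `λ' = λ + b(0)`. Conjugating `g` by the
matrices `(t, λ; 0, 1)` and `(t, λ'; 0, 1)` multiplies `c` by `t` and replaces `b` by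
`t⁻¹(aλ + b - λ'(cλ + d))`, whose constant term `λ + b(0) - λ'` vanishes; so
`g (t, λ; 0, 1) = (t, λ'; 0, 1) h` with `h ∈ J_{n+1}`. Hence `g` permutes the summands of `S·v`
along `λ ↦ λ + b(0)`. The case `I₁ = J₁` follows from `J₂ ⊆ J₁`.
-/

open Matrix

/-- The matrix `(t, Cλ; 0, 1)` as an element of `G = GL₂(F((t)))`. -/
noncomputable def SMat {F : Type*} [Field F] (l : F) : GL (Fin 2) (LaurentSeries F) :=
  Matrix.GeneralLinearGroup.mkOfDetNeZero
    !![HahnSeries.single (1 : ℤ) (1 : F), HahnSeries.C l; 0, 1]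
    (by simp [Matrix.det_fin_two_of])

/-- `x ∈ 𝒪 = F[[t]]`, i.e. no negative coefficients. -/
def InO {F : Type*} [Field F] (x : LaurentSeries F) : Prop :=
  ∀ n : ℤ, n < 0 → x.coeff n = 0

/-- `x ∈ 1 + t𝒪`. -/
def InOneTO {F : Type*} [Field F] (x : LaurentSeries F) : Prop :=
  ∀ n : ℤ, n ≤ 0 → (x - 1).coeff n = 0

/-- `x ∈ t^m𝒪`, i.e. coefficients vanish in degrees `< m`. -/
def InTmO {F : Type*} [Field F] (m : ℕ) (x : LaurentSeries F) : Prop :=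
  ∀ n : ℤ, n < (m : ℤ) → x.coeff n = 0

/-- `x ∈ 𝒪ˣ`, i.e. `x ∈ 𝒪` with nonzero constant term. -/
def InOUnits {F : Type*} [Field F] (x : LaurentSeries F) : Prop :=
  InO x ∧ x.coeff 0 ≠ 0

/-- membership in `J_m`: matrices `(a, b; c, d)` with `a − 1 ∈ t𝒪`, `b ∈ 𝒪`,
`c ∈ t^m𝒪`, `d − 1 ∈ t𝒪` and determinant in `𝒪ˣ`. -/
def InJ {F : Type*} [Field F] (m : ℕ) (g : GL (Fin 2) (LaurentSeries F)) : Prop :=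
  InOneTO ((g : Matrix (Fin 2) (Fin 2) (LaurentSeries F)) 0 0) ∧
  InO ((g : Matrix (Fin 2) (Fin 2) (LaurentSeries F)) 0 1) ∧
  InTmO m ((g : Matrix (Fin 2) (Fin 2) (LaurentSeries F)) 1 0) ∧
  InOneTO ((g : Matrix (Fin 2) (Fin 2) (LaurentSeries F)) 1 1) ∧
  InOUnits (Matrix.det (g : Matrix (Fin 2) (Fin 2) (LaurentSeries F)))

theorem Representation.apply_sum_eq_of_mul_eq_mul {k G V ι : Type*} [CommSemiring k] [Group G]
    [AddCommMonoid V] [Module k V] [Fintype ι] (ρ : Representation k G V) (s : ι → G) (v : V)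
    (g : G) (σ : Equiv.Perm ι) (h : ∀ i, ∃ x, ρ x v = v ∧ g * s i = s (σ i) * x) :
    ρ g (∑ i, ρ (s i) v) = ∑ i, ρ (s i) v := by
  rw [map_sum]
  calc ∑ i, ρ g (ρ (s i) v) = ∑ i, ρ (s (σ i)) v := by
        refine Finset.sum_congr rfl fun i _ => ?_
        obtain ⟨x, hx, hgs⟩ := h i
        rw [← Module.End.mul_apply, ← map_mul, hgs, map_mul, Module.End.mul_apply, hx]
    _ = ∑ i, ρ (s i) v := Equiv.sum_comp σ fun i => ρ (s i) v

section LaurentSeries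

variable {F : Type*} [Field F]

local notation "T" => HahnSeries.single (1 : ℤ) (1 : F)
local notation "T⁻¹" => HahnSeries.single (-1 : ℤ) (1 : F)
local notation "M₂" => Matrix (Fin 2) (Fin 2) (LaurentSeries F)

theorem LaurentSeries.single_one_mul_single_neg_one : T * T⁻¹ = (1 : LaurentSeries F) := by
  rw [HahnSeries.single_mul_single]; simp [HahnSeries.single_zero_one]

theorem LaurentSeries.coeff_mul_single_one (x : LaurentSeries F) (n : ℤ) :
    (x * T).coeff n = x.coeff (n - 1) := by
  simpa using HahnSeries.coeff_mul_single_add (r := (1 : F)) (x := x) (a := n - 1) (b := 1)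

theorem LaurentSeries.coeff_single_neg_one_mul (x : LaurentSeries F) (n : ℤ) :
    (T⁻¹ * x).coeff n = x.coeff (n + 1) := by
  simpa using HahnSeries.coeff_single_mul_add (r := (1 : F)) (x := x) (a := n + 1) (b := -1)

theorem LaurentSeries.coeff_C_mul (μ : F) (x : LaurentSeries F) (n : ℤ) :
    (HahnSeries.C μ * x).coeff n = μ * x.coeff n := by
  rw [HahnSeries.C_mul_eq_smul, HahnSeries.coeff_smul, smul_eq_mul]

theorem InOneTO.coeff_of_neg {x : LaurentSeries F} (h : InOneTO x) {n : ℤ} (hn : n < 0) :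
    x.coeff n = 0 := by
  simpa [HahnSeries.coeff_one, hn.ne] using h n hn.le

theorem InOneTO.coeff_zero {x : LaurentSeries F} (h : InOneTO x) : x.coeff 0 = 1 := by
  simpa [sub_eq_zero] using h 0 le_rfl

theorem InOneTO.add_C_mul {x y : LaurentSeries F} (hx : InOneTO x) (hy : InTmO 1 y) (μ : F) :
    InOneTO (x + HahnSeries.C μ * y) := by
  intro n hn
  rw [add_sub_right_comm, HahnSeries.coeff_add, LaurentSeries.coeff_C_mul, hx n hn,
    hy n (by omega)]
  ring

theorem InTmO.mul_single_one {m : ℕ} {x : LaurentSeries F} (h : InTmO m x) :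
    InTmO (m + 1) (x * T) := by
  intro n hn
  rw [LaurentSeries.coeff_mul_single_one]
  exact h _ (by omega)

theorem InTmO.single_neg_one_mul {x : LaurentSeries F} (h : InTmO 1 x) : InO (T⁻¹ * x) := by
  intro n hn
  rw [LaurentSeries.coeff_single_neg_one_mul]
  exact h _ (by omega)

theorem SMat_val (l : F) :
    (SMat l : M₂) = !![T, HahnSeries.C l; 0, 1] := rfl

theorem SMat_inv_val (l : F) :
    (((SMat l)⁻¹ : GL (Fin 2) (LaurentSeries F)) : M₂) =
      !![T⁻¹, -(T⁻¹ * HahnSeries.C l); 0, 1] := by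
  rw [Matrix.coe_units_inv, SMat_val]
  refine Matrix.inv_eq_left_inv ?_
  rw [Matrix.mul_fin_two]
  ext i j : 1
  fin_cases i <;> fin_cases j <;> simp

theorem SMat_inv_mul_mul_SMat_val (g : GL (Fin 2) (LaurentSeries F)) (l l' : F) :
    (((SMat l')⁻¹ * g * SMat l : GL (Fin 2) (LaurentSeries F)) :
        M₂) =
      let a := (g : M₂) 0 0
      let b := (g : M₂) 0 1
      let c := (g : M₂) 1 0
      let d := (g : M₂) 1 1
      !![a - HahnSeries.C l' * c,
          T⁻¹ * (a * HahnSeries.C l + b - HahnSeries.C l' * (c * HahnSeries.C l + d));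
        c * T, d + HahnSeries.C l * c] := by
  rw [Units.val_mul, Units.val_mul, SMat_inv_val, SMat_val,
    Matrix.eta_fin_two (g : M₂)]
  have := LaurentSeries.single_one_mul_single_neg_one (F := F)
  rw [Matrix.mul_fin_two, Matrix.mul_fin_two]
  ext i j : 1
  fin_cases i <;> fin_cases j <;>
    simp only [Fin.zero_eta, Fin.mk_one, Matrix.of_apply, Matrix.cons_val', Matrix.cons_val_zero,
      Matrix.cons_val_one, Matrix.empty_val', Matrix.cons_val_fin_one]
  · linear_combination ((g : M₂) 0 0 -
      HahnSeries.C l' * (g : M₂) 1 0) * this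
  all_goals ring

theorem det_SMat_inv_mul_mul_SMat (g : GL (Fin 2) (LaurentSeries F)) (l l' : F) :
    (((SMat l')⁻¹ * g * SMat l : GL (Fin 2) (LaurentSeries F)) :
        M₂).det = (g : M₂).det := by
  have hdet : GeneralLinearGroup.det (SMat l) = GeneralLinearGroup.det (SMat l') := by
    ext; simp [SMat_val, Matrix.det_fin_two_of]
  rw [← GeneralLinearGroup.val_det_apply, ← GeneralLinearGroup.val_det_apply, map_mul, map_mul,
    hdet, map_inv, inv_mul_cancel_comm]

theorem InJ.SMat_inv_mul_mul_SMat {n : ℕ} (hn : 1 ≤ n) {g : GL (Fin 2) (LaurentSeries F)}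
    (hg : InJ n g) (l : F) :
    InJ (n + 1) ((SMat (l + ((g : M₂) 0 1).coeff 0))⁻¹ *
      g * SMat l) := by
  obtain ⟨ha, hb, hc, hd, hdet⟩ := hg
  set a := (g : M₂) 0 0
  set b := (g : M₂) 0 1
  set c := (g : M₂) 1 0
  set d := (g : M₂) 1 1
  have hc₁ : InTmO 1 c := fun m hm => hc m (by omega)
  have hX : InTmO 1 (a * HahnSeries.C l + b -
      HahnSeries.C (l + b.coeff 0) * (c * HahnSeries.C l + d)) := by
    intro m hm
    simp only [HahnSeries.coeff_sub, HahnSeries.coeff_add, HahnSeries.C_apply,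
      HahnSeries.coeff_mul_single_zero, HahnSeries.coeff_single_zero_mul, hc₁ m hm]
    rcases (show m ≤ 0 by omega).lt_or_eq with hm | rfl
    · rw [ha.coeff_of_neg hm, hb m hm, hd.coeff_of_neg hm]; ring
    · rw [ha.coeff_zero, hd.coeff_zero]; ring
  have hsub :
      a - HahnSeries.C (l + b.coeff 0) * c = a + HahnSeries.C (-(l + b.coeff 0)) * c := by
    rw [map_neg, neg_mul, ← sub_eq_add_neg]
  refine ⟨?_, ?_, ?_, ?_, det_SMat_inv_mul_mul_SMat g l _ ▸ hdet⟩ <;>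
    simp only [SMat_inv_mul_mul_SMat_val, Matrix.of_apply,
      Matrix.cons_val', Matrix.cons_val_zero, Matrix.cons_val_one, Matrix.empty_val',
      Matrix.cons_val_fin_one]
  · exact hsub ▸ ha.add_C_mul hc₁ _
  · exact hX.single_neg_one_mul
  · exact hc.mul_single_one
  · exact hd.add_C_mul hc₁ l

end LaurentSeries

theorem InJ.mono {F : Type*} [Field F] {m m' : ℕ} (hm : m ≤ m')
    {g : GL (Fin 2) (LaurentSeries F)} (hg : InJ m' g) : InJ m g :=
  ⟨hg.1, hg.2.1, fun j hj => hg.2.2.1 j (by omega), hg.2.2.2⟩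

theorem statement_8_general
    (F : Type*) [Field F] [Fintype F]
    (k : Type*) [Field k] (V : Type*) [AddCommGroup V] [Module k V]
    (ρ : Representation k (GL (Fin 2) (LaurentSeries F)) V) (v : V) :
    (∀ n : ℕ, 1 ≤ n → (∀ g, InJ (n + 1) g → ρ g v = v) →
      ∀ g, InJ n g → ρ g (∑ l : F, ρ (SMat l) v) = ∑ l : F, ρ (SMat l) v) ∧
    ((∀ g, InJ 1 g → ρ g v = v) →
      ∀ g, InJ 1 g → ρ g (∑ l : F, ρ (SMat l) v) = ∑ l : F, ρ (SMat l) v) := by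
  have key : ∀ n : ℕ, 1 ≤ n → (∀ g, InJ (n + 1) g → ρ g v = v) →
      ∀ g, InJ n g → ρ g (∑ l : F, ρ (SMat l) v) = ∑ l : F, ρ (SMat l) v := by
    intro n hn hfix g hg
    let b₀ := ((g : Matrix (Fin 2) (Fin 2) (LaurentSeries F)) 0 1).coeff 0
    refine ρ.apply_sum_eq_of_mul_eq_mul SMat v g (Equiv.addRight b₀) fun l =>
      ⟨_, hfix _ (hg.SMat_inv_mul_mul_SMat hn l), by simp [b₀, mul_assoc]⟩
  exact ⟨key, fun hfix => key 1 le_rfl fun g hg => hfix g (hg.mono (by norm_num))⟩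

/-- Lemma 5.1(iv) of the paper.  With
`S·v = Σ_{λ∈F} (t, Cλ; 0, 1)·v`: for any `n ≥ 1`, if `v` is fixed by every
element of `J_{n+1}`, then `S·v` is fixed by every element of `J_n`.  In
particular, if `v` is fixed by the pro-p Iwahori subgroup `I₁ = J₁`, then so
is `S·v`. -/
theorem statement_8 (p r : ℕ) (hp : p.Prime) (hr : 1 ≤ r)
    (F : Type*) [Field F] [Fintype F] (hF : Fintype.card F = p ^ r)
    (k : Type*) [Field k] (V : Type*) [AddCommGroup V] [Module k V]
    (ρ : Representation k (GL (Fin 2) (LaurentSeries F)) V) (v : V) :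
    (∀ n : ℕ, 1 ≤ n → (∀ g, InJ (n + 1) g → ρ g v = v) →
      ∀ g, InJ n g → ρ g (∑ l : F, ρ (SMat l) v) = ∑ l : F, ρ (SMat l) v) ∧
    ((∀ g, InJ 1 g → ρ g v = v) →
      ∀ g, InJ 1 g → ρ g (∑ l : F, ρ (SMat l) v) = ∑ l : F, ρ (SMat l) v) :=
  statement_8_general F k V ρ v
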